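/- arXiv:2302.10359 — 4 statements merged into one kernel-verified Lean document; each statement's English description precedes it below -/
import Mathlib

section
/- Suppose Δ ≥ 1, fix ε ∈ (0,1), a real p ≥ 1, an integer i ≥ 0, and a finite set F ⊆ ℝ^d with |F| = k. Then the number of cells Z of the axis-aligned grid of side length 2^{−i} (the cells 2^{−i}·(z + [0,1)^d) for z ∈ ℤ^d) satisfying inf_{x∈Z} κ(x,F)^p ≤ (5/ε)·(2^{−i+1}·Δ)^p is at most k·(32·Δ/ε)^d. -/
/-! A cell whose `κ^p`-distance to `F` is at most `(5/ε)(2^{-i+1}Δ)^p` contains a point within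
`κ`-distance `12·2^{-i}Δ/ε` of some `f ∈ F`. Sign invariance and `κ(e_j) = 1` make `κ` dominate
every coordinate, so the index of the cell lies in an integer box of side at most
`3 + 24Δ/ε ≤ 32Δ/ε` around `2^i f`, and there are `k` such boxes. -/

/-- `κ(x, F) = min_{f ∈ F} N (x - f)`. -/
noncomputable def setDist {d : ℕ} (N : Seminorm ℝ (Fin d → ℝ))
    (x : Fin d → ℝ) (F : Finset (Fin d → ℝ)) : ℝ :=
  sInf {r | ∃ f ∈ F, r = N (x - f)}

/-- The `κ`-diameter `Δ` of the unit cube `[0,1)^d`. -/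
noncomputable def cubeDiam {d : ℕ} (N : Seminorm ℝ (Fin d → ℝ)) : ℝ :=
  sSup {r | ∃ x y : Fin d → ℝ, (∀ j, 0 ≤ x j ∧ x j < 1) ∧ (∀ j, 0 ≤ y j ∧ y j < 1) ∧
    r = N (x - y)}

/-- The cell `c·(z + [0,1)^d)` of the axis-aligned grid of side length `c`. -/
def gridCell {d : ℕ} (c : ℝ) (z : Fin d → ℤ) : Set (Fin d → ℝ) :=
  {x | ∀ j, c * z j ≤ x j ∧ x j < c * (z j + 1)}

open Finset

theorem Seminorm.apply_single_le_of_sign_invariant {ι : Type*} [DecidableEq ι]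
    (N : Seminorm ℝ (ι → ℝ))
    (hsign : ∀ σ x : ι → ℝ, (∀ j, σ j = 1 ∨ σ j = -1) → N (σ * x) = N x)
    (x : ι → ℝ) (j : ι) : N (Pi.single j (x j)) ≤ N x := by
  set σ : ι → ℝ := fun l => if l = j then 1 else -1
  have hσ : ∀ l, σ l = 1 ∨ σ l = -1 := fun l => by by_cases h : l = j <;> simp [σ, h]
  -- `x + σ x` keeps the `j`-th coordinate twice and cancels all the others.
  have hsum : x + σ * x = (2 : ℝ) • Pi.single j (x j) := by
    funext l
    by_cases h : l = j
    · subst h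
      simp only [Pi.add_apply, Pi.mul_apply, ↓reduceIte, one_mul, Pi.smul_apply,
        Pi.single_eq_same, smul_eq_mul, σ]
      ring
    · simp [σ, h]
  have := map_add_le_add N x (σ * x)
  rw [hsum, map_smul_eq_mul, hsign σ x hσ] at this
  norm_num at this
  linarith

theorem Seminorm.abs_apply_le_of_sign_invariant {ι : Type*} [DecidableEq ι]
    (N : Seminorm ℝ (ι → ℝ))
    (hsign : ∀ σ x : ι → ℝ, (∀ j, σ j = 1 ∨ σ j = -1) → N (σ * x) = N x)
    (hbasis : ∀ j, N (Pi.single j 1) = 1) (x : ι → ℝ) (j : ι) : |x j| ≤ N x := by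
  have h := N.apply_single_le_of_sign_invariant hsign x j
  rwa [← mul_one (x j), ← smul_eq_mul, Pi.single_smul', map_smul_eq_mul, hbasis, mul_one,
    Real.norm_eq_abs] at h

theorem exists_setDist_eq {d : ℕ} (N : Seminorm ℝ (Fin d → ℝ)) (x : Fin d → ℝ)
    {F : Finset (Fin d → ℝ)} (hF : F.Nonempty) : ∃ f ∈ F, setDist N x F = N (x - f) := by
  have himage : {r | ∃ f ∈ F, r = N (x - f)} = (fun f => N (x - f)) '' ↑F := by
    ext r; simp [eq_comm]
  obtain ⟨f, hf, hmin⟩ := (hF.to_set.image (fun f => N (x - f))).csInf_mem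
    (F.finite_toSet.image _)
  exact ⟨f, hf, by rw [setDist, himage, ← hmin]⟩

theorem Int.card_Icc_ceil_floor_le {a b : ℝ} (h : a ≤ b + 1) :
    (#(Icc ⌈a⌉ ⌊b⌋) : ℝ) ≤ b - a + 1 := by
  have hcast : (#(Icc ⌈a⌉ ⌊b⌋) : ℝ) = max ((⌊b⌋ : ℝ) + 1 - ⌈a⌉) 0 := by
    rw [Int.card_Icc, ← Int.cast_natCast, Int.toNat_eq_max]
    push_cast
    rfl
  rw [hcast]
  exact max_le (by linarith [Int.floor_le b, Int.le_ceil a]) (by linarith)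

noncomputable def gridBox {ι : Type*} [Fintype ι] [DecidableEq ι] (c R : ℝ) (f : ι → ℝ) :
    Finset (ι → ℤ) :=
  Fintype.piFinset fun j => Icc ⌈(f j - R) / c⌉ ⌊(f j + R) / c⌋

section gridBox

variable {ι : Type*} [Fintype ι] [DecidableEq ι] {c R : ℝ}

theorem mem_gridBox (hc : 0 < c) {f : ι → ℝ} {z : ι → ℤ} :
    z ∈ gridBox c R f ↔ ∀ j, |c * z j - f j| ≤ R := by
  simp only [gridBox, Fintype.mem_piFinset, mem_Icc, Int.ceil_le, Int.le_floor,
    div_le_iff₀ hc, le_div_iff₀ hc, abs_le]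
  refine forall_congr' fun j => ?_
  constructor <;> rintro ⟨h₁, h₂⟩ <;> constructor <;> linarith

theorem card_gridBox_le (hc : 0 < c) (hR : 0 ≤ R) (f : ι → ℝ) :
    (#(gridBox c R f) : ℝ) ≤ (2 * R / c + 1) ^ Fintype.card ι := by
  rw [gridBox, Fintype.card_piFinset, Nat.cast_prod, ← card_univ, ← prod_const]
  refine prod_le_prod (fun _ _ => Nat.cast_nonneg _) fun j _ => ?_
  have hle : (f j - R) / c ≤ (f j + R) / c := by gcongr; linarith
  calc (#(Icc ⌈(f j - R) / c⌉ ⌊(f j + R) / c⌋) : ℝ)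
      ≤ (f j + R) / c - (f j - R) / c + 1 := Int.card_Icc_ceil_floor_le (by linarith)
    _ = 2 * R / c + 1 := by ring

theorem finite_and_card_le_of_forall_mem_gridBox {T : Set (ι → ℤ)} {F : Finset (ι → ℝ)}
    (hc : 0 < c) (hR : 0 ≤ R) (hT : ∀ z ∈ T, ∃ f ∈ F, z ∈ gridBox c R f) :
    T.Finite ∧ (Nat.card T : ℝ) ≤ #F * (2 * R / c + 1) ^ Fintype.card ι := by
  have hsub : T ⊆ F.biUnion (gridBox c R) := fun z hz => by
    obtain ⟨f, hf, hz⟩ := hT z hz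
    exact mem_biUnion.mpr ⟨f, hf, hz⟩
  refine ⟨(F.biUnion (gridBox c R)).finite_toSet.subset hsub, ?_⟩
  calc (Nat.card T : ℝ) ≤ #(F.biUnion (gridBox c R)) := by
        rw [Nat.card_coe_set_eq]
        exact_mod_cast (Set.ncard_le_ncard hsub (finite_toSet _)).trans_eq
          (Set.ncard_coe_finset _)
    _ ≤ ∑ f ∈ F, (#(gridBox c R f) : ℝ) := by exact_mod_cast card_biUnion_le
    _ ≤ ∑ _f ∈ F, (2 * R / c + 1) ^ Fintype.card ι :=
        sum_le_sum fun f _ => card_gridBox_le hc hR f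
    _ = #F * (2 * R / c + 1) ^ Fintype.card ι := by rw [sum_const, nsmul_eq_mul]

end gridBox

theorem mem_gridBox_of_mem_gridCell {d : ℕ} {c r : ℝ} (hc : 0 < c) {z : Fin d → ℤ}
    {x f : Fin d → ℝ} (hx : x ∈ gridCell c z) (hxf : ∀ j, |x j - f j| ≤ r) :
    z ∈ gridBox c (c + r) f := by
  refine (mem_gridBox hc).mpr fun j => ?_
  have hcell := hx j
  have hj := abs_le.mp (hxf j)
  rw [abs_le]
  constructor <;> nlinarith

theorem Real.lt_mul_of_rpow_lt_mul_rpow {x a b p : ℝ} (hx : 0 ≤ x) (ha : 0 ≤ a) (hb : 1 ≤ b)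
    (hp : 1 ≤ p) (h : x ^ p < b * a ^ p) : x < b * a := by
  have hbp : b * a ^ p ≤ (b * a) ^ p := by
    rw [Real.mul_rpow (by linarith) ha]
    gcongr
    simpa using Real.rpow_le_rpow_of_exponent_le hb hp
  exact (Real.rpow_lt_rpow_iff hx (by positivity) (by linarith)).mp (h.trans_le hbp)

theorem exists_mem_gridBox_of_sInf_le {d : ℕ} (N : Seminorm ℝ (Fin d → ℝ))
    (hsign : ∀ σ x : Fin d → ℝ, (∀ j, σ j = 1 ∨ σ j = -1) → N (σ * x) = N x)
    (hbasis : ∀ j, N (Pi.single j 1) = 1) {F : Finset (Fin d → ℝ)} (hF : F.Nonempty)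
    {c p a b B : ℝ} (hc : 0 < c) (hp : 1 ≤ p) (ha : 0 ≤ a) (hb : 1 ≤ b) (hB : B < b * a ^ p)
    {z : Fin d → ℤ} (hz : sInf {r | ∃ x ∈ gridCell c z, r = setDist N x F ^ p} ≤ B) :
    ∃ f ∈ F, z ∈ gridBox c (c + b * a) f := by
  have hcorner : (fun j => c * z j) ∈ gridCell c z := fun j => ⟨le_rfl, by linarith⟩
  obtain ⟨_, ⟨x, hx, rfl⟩, hlt⟩ := exists_lt_of_csInf_lt
    (s := {r | ∃ x ∈ gridCell c z, r = setDist N x F ^ p}) ⟨_, _, hcorner, rfl⟩ (hz.trans_lt hB)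
  obtain ⟨f, hf, hdist⟩ := exists_setDist_eq N x hF
  rw [hdist] at hlt
  have hNxf := Real.lt_mul_of_rpow_lt_mul_rpow (apply_nonneg N _) ha hb hp hlt
  refine ⟨f, hf, mem_gridBox_of_mem_gridCell hc hx fun j => ?_⟩
  calc |x j - f j| = |(x - f) j| := rfl
    _ ≤ N (x - f) := N.abs_apply_le_of_sign_invariant hsign hbasis _ j
    _ ≤ b * a := hNxf.le

theorem near_cells_count_general {d k : ℕ} (hk : 1 ≤ k)
    (N : Seminorm ℝ (Fin d → ℝ))
    (hsign : ∀ σ x : Fin d → ℝ, (∀ j, σ j = 1 ∨ σ j = -1) → N (σ * x) = N x)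
    (hbasis : ∀ j, N (Pi.single j 1) = 1)
    (Δ : ℝ) (hΔ : 1 ≤ Δ)
    (ε p : ℝ) (hε0 : 0 < ε) (hε1 : ε < 1) (hp : 1 ≤ p)
    (i : ℕ) (F : Finset (Fin d → ℝ)) (hFcard : F.card = k) :
    {z : Fin d → ℤ |
        sInf {r | ∃ x ∈ gridCell ((2 : ℝ) ^ (-(i : ℤ))) z, r = setDist N x F ^ p}
          ≤ (5 / ε) * ((2 : ℝ) ^ (-(i : ℤ) + 1) * Δ) ^ p}.Finite ∧
    (Nat.card {z : Fin d → ℤ |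
        sInf {r | ∃ x ∈ gridCell ((2 : ℝ) ^ (-(i : ℤ))) z, r = setDist N x F ^ p}
          ≤ (5 / ε) * ((2 : ℝ) ^ (-(i : ℤ) + 1) * Δ) ^ p} : ℝ)
      ≤ k * (32 * Δ / ε) ^ d := by
  have hF : F.Nonempty := card_pos.mp (hFcard ▸ hk)
  set c : ℝ := (2 : ℝ) ^ (-(i : ℤ))
  have hc : 0 < c := by positivity
  rw [show (2 : ℝ) ^ (-(i : ℤ) + 1) = 2 * c by rw [zpow_add_one₀ two_ne_zero]; ring]
  have hΔ0 : 0 < Δ := by linarith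
  -- The infimum over a cell need not be attained, so we trade `5/ε` for `6/ε`.
  have hB : 5 / ε * (2 * c * Δ) ^ p < 6 / ε * (2 * c * Δ) ^ p := by
    gcongr
    norm_num
  have h6ε : 1 ≤ 6 / ε := by rw [le_div_iff₀ hε0]; linarith
  obtain ⟨hfin, hcard⟩ := finite_and_card_le_of_forall_mem_gridBox hc (by positivity)
    fun z hz => exists_mem_gridBox_of_sInf_le N hsign hbasis hF hc hp (by positivity) h6ε hB hz
  refine ⟨hfin, hcard.trans ?_⟩
  rw [hFcard, Fintype.card_fin]
  gcongr
  have hside : 2 * (c + 6 / ε * (2 * c * Δ)) / c + 1 = 3 + 24 * (Δ / ε) := by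
    field_simp; ring
  have hΔε : 1 ≤ Δ / ε := by rw [le_div_iff₀ hε0]; linarith
  rw [hside, mul_div_assoc]
  linarith

/-- The number of cells of the grid of side `2^{-i}` whose `κ^p`-distance to a fixed set of
`k` centers is at most `(5/ε)·(2^{-i+1}·Δ)^p` is at most `k·(32Δ/ε)^d`.  Here `κ` is induced
by a sign-invariant normalized norm, and `Δ ≥ 1` is the `κ`-diameter of the unit cube. -/
theorem near_cells_count {d k : ℕ} (hk : 1 ≤ k)
    (N : Seminorm ℝ (Fin d → ℝ)) (hNdef : ∀ x, N x = 0 → x = 0)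
    (hsign : ∀ σ x : Fin d → ℝ, (∀ j, σ j = 1 ∨ σ j = -1) → N (σ * x) = N x)
    (hbasis : ∀ j, N (Pi.single j 1) = 1)
    (Δ : ℝ) (hΔdef : Δ = cubeDiam N) (hΔ : 1 ≤ Δ)
    (ε p : ℝ) (hε0 : 0 < ε) (hε1 : ε < 1) (hp : 1 ≤ p)
    (i : ℕ) (F : Finset (Fin d → ℝ)) (hFcard : F.card = k) :
    {z : Fin d → ℤ |
        sInf {r | ∃ x ∈ gridCell ((2 : ℝ) ^ (-(i : ℤ))) z, r = setDist N x F ^ p}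
          ≤ (5 / ε) * ((2 : ℝ) ^ (-(i : ℤ) + 1) * Δ) ^ p}.Finite ∧
    (Nat.card {z : Fin d → ℤ |
        sInf {r | ∃ x ∈ gridCell ((2 : ℝ) ^ (-(i : ℤ))) z, r = setDist N x F ^ p}
          ≤ (5 / ε) * ((2 : ℝ) ^ (-(i : ℤ) + 1) * Δ) ^ p} : ℝ)
      ≤ k * (32 * Δ / ε) ^ d :=
  near_cells_count_general hk N hsign hbasis Δ hΔ ε p hε0 hε1 hp i F hFcard
end

section
/- Let x₁,…,xₙ ∈ B_d ⊆ ℝ^d (Euclidean ball of diameter 1), fix an integer k ≥ 1, a real p ≥ 1, and ε ∈ (0, 1/4), and let π : ℝ^d → ℝ^m be a map with π(xᵢ) ∈ B_m for every i. Suppose that for every finite sequence y₁,…,y_N with each yⱼ ∈ {x₁,…,xₙ} and every k-partition 𝒞 of y₁,…,y_N, the uniform-weight sample partition costs satisfy (1+ε)^{−1}·ĉost(𝒞) ≤ ĉost(π(𝒞)) ≤ (1+ε)·ĉost(𝒞). Then for every vector w of nonnegative weights summing to 1 and every k-partition 𝒞 of x₁,…,xₙ, (1+ε)^{−3}·ĉost(𝒞,w)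 ≤ ĉost(π(𝒞),w) ≤ (1+ε)³·ĉost(𝒞,w). -/
/-!
The hypothesis controls the costs for every weight vector of the form `N / ∑ N` with
`N : Fin n → ℕ`: such weights are realized by the uniform weights on the sequence that repeats
`xᵢ` exactly `Nᵢ` times. These weight vectors are dense in the simplex for the `ℓ¹` distance,
and since all points and centers lie in a ball of diameter 1, every term `‖yᵢ - u‖ᵖ` is at most
1, so the sample cost is 1-Lipschitz in the weights. Passing to the limit gives the bounds with
the factor `1 + ε`, which is stronger than `(1 + ε)³`.
-/

/-- The weighted sample `(k,p)`-partition cost of points `y₁, …, yₙ` labelled by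
`ℓ : Fin n → Fin k`, with weights `w` and centers ranging over the ball of diameter 1:
`ĉost(𝒞, w) = inf_{u⁽¹⁾,…,u⁽ᵏ⁾ ∈ B} Σᵢ wᵢ ‖yᵢ - u^{(ℓ i)}‖₂^p`. -/
noncomputable def sampleCost {E : Type*} [NormedAddCommGroup E] {n k : ℕ}
    (p : ℝ) (y : Fin n → E) (ℓ : Fin n → Fin k) (w : Fin n → ℝ) : ℝ :=
  ⨅ u : Fin k → (Metric.closedBall (0 : E) (1 / 2)),
    ∑ i, w i * ‖y i - (u (ℓ i) : E)‖ ^ p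

open Finset Metric

lemma exists_sum_abs_sub_nat_div_sum_le {ι : Type*} [Fintype ι] {w : ι → ℝ}
    (hw : ∀ i, 0 ≤ w i) (hsum : ∑ i, w i = 1) {δ : ℝ} (hδ : 0 < δ) :
    ∃ N : ι → ℕ, ∑ i, |w i - N i / ∑ j, (N j : ℝ)| ≤ δ := by
  obtain ⟨M, hM⟩ := exists_nat_gt (2 * Fintype.card ι / δ)
  have hM0 : (0 : ℝ) < M := lt_of_le_of_lt (by positivity) hM
  -- Rounding up gives `M ≤ ∑ N ≤ M + card ι`, hence an `ℓ¹` error of at most `2 card ι / M`.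
  refine ⟨fun i => ⌈M * w i⌉₊, ?_⟩
  set N : ι → ℝ := fun i => (⌈M * w i⌉₊ : ℝ)
  set S := ∑ j, N j
  have hMN : ∀ i, M * w i ≤ N i := fun i => Nat.le_ceil _
  have hMS : (M : ℝ) ≤ S := by
    calc (M : ℝ) = ∑ i, M * w i := by rw [← mul_sum, hsum, mul_one]
      _ ≤ S := sum_le_sum fun i _ => hMN i
  have hSM : S ≤ M + Fintype.card ι := by
    calc S ≤ ∑ i, (M * w i + 1) :=
          sum_le_sum fun i _ => (Nat.ceil_lt_add_one (mul_nonneg hM0.le (hw i))).le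
      _ = M + Fintype.card ι := by simp [sum_add_distrib, ← mul_sum, hsum]
  have hS0 : 0 < S := hM0.trans_le hMS
  have hterm : ∀ i, |w i - N i / S| ≤ (N i / M - w i) + (N i / M - N i / S) := fun i => by
    have h1 : w i ≤ N i / M := (le_div_iff₀ hM0).2 (by linarith [hMN i])
    have h2 : N i / S ≤ N i / M := div_le_div_of_nonneg_left (Nat.cast_nonneg _) hM0 hMS
    exact abs_le.2 ⟨by linarith, by linarith⟩
  calc ∑ i, |w i - N i / S| ≤ ∑ i, ((N i / M - w i) + (N i / M - N i / S)) :=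
        sum_le_sum fun i _ => hterm i
    _ = 2 * ((S - M) / M) := by
        simp only [sum_add_distrib, sum_sub_distrib, ← sum_div, hsum]
        field_simp
        ring
    _ ≤ δ := by
        rw [mul_div_assoc', div_le_iff₀ hM0]
        rw [div_lt_iff₀ hδ] at hM
        linarith

lemma sum_mul_le_sum_mul_add_sum_abs_sub {ι : Type*} (s : Finset ι) {a : ι → ℝ}
    (ha0 : ∀ i, 0 ≤ a i) (ha1 : ∀ i, a i ≤ 1) (w v : ι → ℝ) :
    ∑ i ∈ s, w i * a i ≤ ∑ i ∈ s, v i * a i + ∑ i ∈ s, |w i - v i| := by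
  rw [← sum_add_distrib]
  refine sum_le_sum fun i _ => ?_
  nlinarith [le_abs_self (w i - v i), abs_nonneg (w i - v i), ha0 i, ha1 i]

section SampleCost

variable {E : Type*} [NormedAddCommGroup E] {n k : ℕ}

lemma norm_sub_rpow_le_one {y u : E} (hy : y ∈ closedBall (0 : E) (1 / 2))
    (hu : u ∈ closedBall (0 : E) (1 / 2)) {p : ℝ} (hp : 0 ≤ p) : ‖y - u‖ ^ p ≤ 1 := by
  rw [mem_closedBall_zero_iff] at hy hu
  exact Real.rpow_le_one (norm_nonneg _) ((norm_sub_le y u).trans (by linarith)) hp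

instance : Nonempty (closedBall (0 : E) (1 / 2)) :=
  ⟨⟨0, mem_closedBall_self (by norm_num)⟩⟩

lemma sampleCost_nonneg (p : ℝ) (y : Fin n → E) (ℓ : Fin n → Fin k) {w : Fin n → ℝ}
    (hw : ∀ i, 0 ≤ w i) : 0 ≤ sampleCost p y ℓ w :=
  le_ciInf fun _ => sum_nonneg fun i _ => mul_nonneg (hw i) (Real.rpow_nonneg (norm_nonneg _) p)

lemma sampleCost_le_sum (p : ℝ) (y : Fin n → E) (ℓ : Fin n → Fin k) {w : Fin n → ℝ}
    (hw : ∀ i, 0 ≤ w i) (u : Fin k → closedBall (0 : E) (1 / 2)) :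
    sampleCost p y ℓ w ≤ ∑ i, w i * ‖y i - (u (ℓ i) : E)‖ ^ p :=
  ciInf_le ⟨0, by
    rintro _ ⟨u', rfl⟩
    exact sum_nonneg fun i _ => mul_nonneg (hw i) (Real.rpow_nonneg (norm_nonneg _) p)⟩ u

lemma sampleCost_le_sampleCost_add_sum_abs_sub {p : ℝ} (hp : 0 ≤ p) {y : Fin n → E}
    (hy : ∀ i, y i ∈ closedBall (0 : E) (1 / 2)) (ℓ : Fin n → Fin k) {w : Fin n → ℝ}
    (hw : ∀ i, 0 ≤ w i) (v : Fin n → ℝ) :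
    sampleCost p y ℓ w ≤ sampleCost p y ℓ v + ∑ i, |w i - v i| := by
  rw [← sub_le_iff_le_add]
  refine le_ciInf fun u => sub_le_iff_le_add.2 ?_
  exact (sampleCost_le_sum p y ℓ hw u).trans <| sum_mul_le_sum_mul_add_sum_abs_sub _
    (fun i => Real.rpow_nonneg (norm_nonneg _) p) (fun i => norm_sub_rpow_le_one (hy i) (u _).2 hp)
    w v

/-- The index map of the sequence repeating the `i`-th term `N i` times. -/
def replicateIndex (N : Fin n → ℕ) (j : Fin (∑ i, N i)) : Fin n :=
  (finSigmaFinEquiv.symm j).1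

lemma sampleCost_replicate (p : ℝ) (y : Fin n → E) (ℓ : Fin n → Fin k) (N : Fin n → ℕ) :
    sampleCost p (y ∘ replicateIndex N) (ℓ ∘ replicateIndex N)
        (fun _ => ((∑ i, N i : ℕ) : ℝ)⁻¹)
      = sampleCost p y ℓ (fun i => N i / ∑ j, (N j : ℝ)) := by
  refine iInf_congr fun u => ?_
  let f : Fin n → ℝ := fun i => ((∑ i, N i : ℕ) : ℝ)⁻¹ * ‖y i - (u (ℓ i) : E)‖ ^ p
  calc ∑ j, f (replicateIndex N j) = ∑ s : (i : Fin n) × Fin (N i), f s.1 :=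
        finSigmaFinEquiv.symm.sum_comp (fun s => f s.1)
    _ = ∑ i, (N i / ∑ j, (N j : ℝ)) * ‖y i - (u (ℓ i) : E)‖ ^ p := by
        simp only [Fintype.sum_sigma, sum_const, card_univ, Fintype.card_fin, nsmul_eq_mul, f,
          Nat.cast_sum]
        exact sum_congr rfl fun i _ => by ring

end SampleCost

lemma sampleCost_le_mul_of_forall_nat_weights {E F : Type*} [NormedAddCommGroup E]
    [NormedAddCommGroup F] {n k : ℕ} {p c : ℝ} (hp : 0 ≤ p) (hc : 0 ≤ c) {y : Fin n → E}
    {z : Fin n → F} (hy : ∀ i, y i ∈ closedBall (0 : E) (1 / 2))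
    (hz : ∀ i, z i ∈ closedBall (0 : F) (1 / 2)) (ℓ : Fin n → Fin k)
    (h : ∀ N : Fin n → ℕ, sampleCost p z ℓ (fun i => N i / ∑ j, (N j : ℝ))
      ≤ c * sampleCost p y ℓ (fun i => N i / ∑ j, (N j : ℝ)))
    {w : Fin n → ℝ} (hw : ∀ i, 0 ≤ w i) (hsum : ∑ i, w i = 1) :
    sampleCost p z ℓ w ≤ c * sampleCost p y ℓ w := by
  refine le_of_forall_pos_le_add fun δ hδ => ?_
  have hδ' : 0 < δ / (c + 1) := by positivity
  obtain ⟨N, hN⟩ := exists_sum_abs_sub_nat_div_sum_le hw hsum hδ'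
  set v : Fin n → ℝ := fun i => N i / ∑ j, (N j : ℝ)
  have hv : ∀ i, 0 ≤ v i := fun i => by positivity
  have hN' : ∑ i, |v i - w i| ≤ δ / (c + 1) := by simpa only [abs_sub_comm] using hN
  have hz_wv := sampleCost_le_sampleCost_add_sum_abs_sub hp hz ℓ hw v
  have hy_vw := sampleCost_le_sampleCost_add_sum_abs_sub hp hy ℓ hv w
  calc sampleCost p z ℓ w ≤ c * sampleCost p y ℓ v + δ / (c + 1) := by linarith [h N]
    _ ≤ c * (sampleCost p y ℓ w + δ / (c + 1)) + δ / (c + 1) := by gcongr; linarith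
    _ = c * sampleCost p y ℓ w + δ := by field_simp; ring

theorem dimension_reduction_weighted_partition_costs_general
    {d m n k : ℕ}
    (p : ℝ) (hp : 1 ≤ p) (ε : ℝ) (hε0 : 0 < ε)
    (x : Fin n → EuclideanSpace ℝ (Fin d))
    (hx : ∀ i, x i ∈ Metric.closedBall (0 : EuclideanSpace ℝ (Fin d)) (1 / 2))
    (π : EuclideanSpace ℝ (Fin d) → EuclideanSpace ℝ (Fin m))
    (hπ : ∀ i, π (x i) ∈ Metric.closedBall (0 : EuclideanSpace ℝ (Fin m)) (1 / 2))
    (hpres : ∀ (M : ℕ) (y : Fin M → EuclideanSpace ℝ (Fin d)),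
      (∀ j, ∃ i, y j = x i) → ∀ ℓ : Fin M → Fin k,
        (1 + ε)⁻¹ * sampleCost p y ℓ (fun _ => (M : ℝ)⁻¹)
            ≤ sampleCost p (fun j => π (y j)) ℓ (fun _ => (M : ℝ)⁻¹) ∧
        sampleCost p (fun j => π (y j)) ℓ (fun _ => (M : ℝ)⁻¹)
            ≤ (1 + ε) * sampleCost p y ℓ (fun _ => (M : ℝ)⁻¹)) :
    ∀ w : Fin n → ℝ, (∀ i, 0 ≤ w i) → (∑ i, w i) = 1 →
      ∀ ℓ : Fin n → Fin k,
        ((1 + ε) ^ 3)⁻¹ * sampleCost p x ℓ w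
            ≤ sampleCost p (fun i => π (x i)) ℓ w ∧
        sampleCost p (fun i => π (x i)) ℓ w ≤ (1 + ε) ^ 3 * sampleCost p x ℓ w := by
  intro w hw hsum ℓ
  have hp0 : 0 ≤ p := by linarith
  have hε1 : 0 < 1 + ε := by linarith
  have hnat (N : Fin n → ℕ) := by
    have h := hpres _ (x ∘ replicateIndex N) (fun j => ⟨_, rfl⟩) (ℓ ∘ replicateIndex N)
    rwa [sampleCost_replicate, ← Function.comp_def π, ← Function.comp_assoc,
      sampleCost_replicate] at h
  have upper := sampleCost_le_mul_of_forall_nat_weights hp0 hε1.le hx hπ ℓ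
    (fun N => (hnat N).2) hw hsum
  have lower := sampleCost_le_mul_of_forall_nat_weights hp0 hε1.le hπ hx ℓ
    (fun N => (inv_mul_le_iff₀ hε1).1 (hnat N).1) hw hsum
  have hcube : 1 + ε ≤ (1 + ε) ^ 3 := le_self_pow₀ (by linarith) three_ne_zero
  have hcost := sampleCost_nonneg p x ℓ hw
  constructor
  · calc ((1 + ε) ^ 3)⁻¹ * sampleCost p x ℓ w ≤ (1 + ε)⁻¹ * sampleCost p x ℓ w := by gcongr
      _ ≤ _ := (inv_mul_le_iff₀ hε1).2 lower
  · exact upper.trans (by gcongr)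

/-- If a dimension-reduction map `π` preserves (up to `1 ± ε` factors) the uniform-weight
sample partition costs of every finite sequence drawn from the points `x₁, …, xₙ ∈ B_d`,
then it preserves weighted sample partition costs up to `(1+ε)^{±3}` factors. -/
theorem dimension_reduction_weighted_partition_costs
    {d m n k : ℕ} (hk : 1 ≤ k)
    (p : ℝ) (hp : 1 ≤ p) (ε : ℝ) (hε0 : 0 < ε) (hε : ε < 1 / 4)
    (x : Fin n → EuclideanSpace ℝ (Fin d))
    (hx : ∀ i, x i ∈ Metric.closedBall (0 : EuclideanSpace ℝ (Fin d)) (1 / 2))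
    (π : EuclideanSpace ℝ (Fin d) → EuclideanSpace ℝ (Fin m))
    (hπ : ∀ i, π (x i) ∈ Metric.closedBall (0 : EuclideanSpace ℝ (Fin m)) (1 / 2))
    (hpres : ∀ (M : ℕ) (y : Fin M → EuclideanSpace ℝ (Fin d)),
      (∀ j, ∃ i, y j = x i) → ∀ ℓ : Fin M → Fin k,
        (1 + ε)⁻¹ * sampleCost p y ℓ (fun _ => (M : ℝ)⁻¹)
            ≤ sampleCost p (fun j => π (y j)) ℓ (fun _ => (M : ℝ)⁻¹) ∧
        sampleCost p (fun j => π (y j)) ℓ (fun _ => (M : ℝ)⁻¹)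
            ≤ (1 + ε) * sampleCost p y ℓ (fun _ => (M : ℝ)⁻¹)) :
    ∀ w : Fin n → ℝ, (∀ i, 0 ≤ w i) → (∑ i, w i) = 1 →
      ∀ ℓ : Fin n → Fin k,
        ((1 + ε) ^ 3)⁻¹ * sampleCost p x ℓ w
            ≤ sampleCost p (fun i => π (x i)) ℓ w ∧
        sampleCost p (fun i => π (x i)) ℓ w ≤ (1 + ε) ^ 3 * sampleCost p x ℓ w :=
  dimension_reduction_weighted_partition_costs_general p hp ε hε0 x hx π hπ hpres
end

section
/- Let X ⊆ ℝ^d, c > 0, r ≥ 0, and let F* ⊆ ℝ^d be a finite set with |F*| = k such that sup_{x∈X} κ(x, F*) ≤ r. Then the number of cells of the axis-aligned grid of side c (the cells c·(z + [0,1)^d) for z ∈ ℤ^d) that intersect X is at most k·(1 + 2Δ + 2r/c)^d. -/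
/-!
Sign invariance and `N (eᵢ) = 1` squeeze the norm between the sup norm and the `ℓ¹` norm, so
`N (x - f) ≤ r` forces `|xⱼ - fⱼ| ≤ r` in every coordinate, and `Δ ≥ 1` as soon as `d ≥ 1`.
A point `x` lies in the cell indexed by `z` exactly when `zⱼ = ⌊xⱼ / c⌋`, so the cells meeting the
`r`-neighbourhood of a center `f` are indexed by a box of integer points with fewer than
`2r/c + 2 ≤ 1 + 2Δ + 2r/c` values per coordinate. Summing over the `k` centers gives the bound.
-/

open Finset

namespace Seminorm

lemma apply_single {ι : Type*} [DecidableEq ι] (N : Seminorm ℝ (ι → ℝ))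
    (hbasis : ∀ j, N (Pi.single j 1) = 1) (j : ι) (a : ℝ) : N (Pi.single j a) = |a| := by
  have : (Pi.single j a : ι → ℝ) = a • Pi.single j 1 := by rw [← Pi.single_smul, smul_eq_mul, mul_one]
  rw [this, map_smul_eq_mul, hbasis, Real.norm_eq_abs, mul_one]

lemma apply_le_sum_abs {ι : Type*} [Fintype ι] [DecidableEq ι] (N : Seminorm ℝ (ι → ℝ))
    (hbasis : ∀ j, N (Pi.single j 1) = 1) (v : ι → ℝ) : N v ≤ ∑ j, |v j| := by
  calc N v = N (∑ j, Pi.single j (v j)) := by rw [Finset.univ_sum_single]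
    _ ≤ ∑ j, N (Pi.single j (v j)) :=
      Finset.le_sum_of_subadditive N (map_zero N).le (map_add_le_add N) _ _
    _ = ∑ j, |v j| := by simp only [N.apply_single hbasis]

/-- Flipping the signs of all coordinates but `j` gives `u + σ u = 2 u_j e_j`. -/
lemma abs_apply_le {ι : Type*} [DecidableEq ι] (N : Seminorm ℝ (ι → ℝ))
    (hsign : ∀ σ x : ι → ℝ, (∀ j, σ j = 1 ∨ σ j = -1) → N (σ * x) = N x)
    (hbasis : ∀ j, N (Pi.single j 1) = 1) (u : ι → ℝ) (j : ι) : |u j| ≤ N u := by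
  set σ : ι → ℝ := fun i => if i = j then 1 else -1
  have hσ : N (σ * u) = N u := hsign σ u fun i => by by_cases h : i = j <;> simp [σ, h]
  have hsum : u + σ * u = (2 : ℝ) • Pi.single j (u j) := by
    funext i
    by_cases h : i = j
    · subst h; simp [σ, two_mul]
    · simp [σ, h]
  have htriangle := map_add_le_add N u (σ * u)
  rw [hsum, map_smul_eq_mul, N.apply_single hbasis, hσ, Real.norm_two] at htriangle
  linarith

end Seminorm

lemma one_le_cubeDiam {d : ℕ} (N : Seminorm ℝ (Fin d → ℝ))
    (hbasis : ∀ j, N (Pi.single j 1) = 1) (hd : 0 < d) : 1 ≤ cubeDiam N := by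
  have hbdd : BddAbove {r | ∃ x y : Fin d → ℝ, (∀ j, 0 ≤ x j ∧ x j < 1) ∧
      (∀ j, 0 ≤ y j ∧ y j < 1) ∧ r = N (x - y)} := by
    refine ⟨d, ?_⟩
    rintro _ ⟨x, y, hx, hy, rfl⟩
    calc N (x - y) ≤ ∑ j, |x j - y j| := N.apply_le_sum_abs hbasis (x - y)
      _ ≤ ∑ _j : Fin d, (1 : ℝ) := Finset.sum_le_sum fun j _ => by
          rw [abs_le]; constructor <;> linarith [hx j, hy j]
      _ = d := by simp
  have hmem : ∀ t : ℝ, 0 ≤ t → t < 1 → t ≤ cubeDiam N := fun t ht0 ht1 =>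
    le_csSup hbdd ⟨Pi.single ⟨0, hd⟩ t, 0,
      fun i => by by_cases h : i = ⟨0, hd⟩ <;> simp [h, ht0, ht1],
      by simp, by rw [sub_zero, N.apply_single hbasis, abs_of_nonneg ht0]⟩
  refine le_of_forall_lt_imp_le_of_dense fun t ht => ?_
  rcases lt_or_ge t 0 with ht0 | ht0
  · linarith [hmem 0 le_rfl one_pos]
  · exact hmem t ht0 ht

lemma exists_sub_le_of_setDist_le {d : ℕ} (N : Seminorm ℝ (Fin d → ℝ)) {x : Fin d → ℝ}
    {F : Finset (Fin d → ℝ)} {r : ℝ} (hF : F.Nonempty) (h : setDist N x F ≤ r) :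
    ∃ f ∈ F, N (x - f) ≤ r := by
  obtain ⟨f, hf, hmin⟩ := F.exists_min_image (fun f => N (x - f)) hF
  refine ⟨f, hf, le_trans ?_ h⟩
  exact le_csInf ⟨_, f, hf, rfl⟩ fun _ ⟨g, hg, hs⟩ => hs ▸ hmin g hg

section Grid

variable {d : ℕ} {c : ℝ}

noncomputable def gridIndex (c : ℝ) (x : Fin d → ℝ) : Fin d → ℤ := fun j => ⌊x j / c⌋

lemma mem_gridCell_iff (hc : 0 < c) {x : Fin d → ℝ} {z : Fin d → ℤ} :
    x ∈ gridCell c z ↔ gridIndex c x = z := by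
  simp only [gridCell, Set.mem_ofPred_eq, gridIndex, funext_iff, Int.floor_eq_iff,
    le_div_iff₀ hc, div_lt_iff₀ hc, mul_comm c]

lemma setOf_gridCell_inter_nonempty (hc : 0 < c) (X : Set (Fin d → ℝ)) :
    {z | (gridCell c z ∩ X).Nonempty} = gridIndex c '' X := by
  ext z
  simp only [Set.mem_ofPred_eq, Set.mem_image, Set.Nonempty, Set.mem_inter_iff,
    mem_gridCell_iff hc, and_comm]

/-- The indices of the cells meeting the sup-norm ball of radius `r` around `f`. -/
noncomputable def gridWindow (c r : ℝ) (f : Fin d → ℝ) : Finset (Fin d → ℤ) :=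
  Fintype.piFinset fun j => Icc ⌊(f j - r) / c⌋ ⌊(f j + r) / c⌋

lemma gridIndex_mem_gridWindow (hc : 0 < c) {r : ℝ} {x f : Fin d → ℝ}
    (h : ∀ j, |x j - f j| ≤ r) : gridIndex c x ∈ gridWindow c r f := by
  refine Fintype.mem_piFinset.2 fun j => mem_Icc.2 ⟨?_, ?_⟩ <;>
  · apply Int.floor_mono
    gcongr
    linarith [abs_le.1 (h j)]

lemma card_Icc_floor_lt {u v : ℝ} (h : v ≤ u) : ((Icc ⌊v⌋ ⌊u⌋).card : ℝ) < u - v + 2 := by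
  have hle : ⌊v⌋ ≤ ⌊u⌋ := Int.floor_mono h
  rw [Int.card_Icc, ← Int.cast_natCast, Int.toNat_of_nonneg (by omega)]
  push_cast
  linarith [Int.floor_le u, Int.lt_floor_add_one v]

lemma card_gridWindow_le (hc : 0 < c) {r : ℝ} (hr : 0 ≤ r) (f : Fin d → ℝ) :
    ((gridWindow c r f).card : ℝ) ≤ (2 * r / c + 2) ^ d := by
  rw [gridWindow, Fintype.card_piFinset, Nat.cast_prod]
  calc ∏ j, ((Icc ⌊(f j - r) / c⌋ ⌊(f j + r) / c⌋).card : ℝ) ≤ ∏ _j : Fin d, (2 * r / c + 2) :=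
        Finset.prod_le_prod (fun _ _ => by positivity) fun j _ => by
          have := card_Icc_floor_lt (u := (f j + r) / c) (v := (f j - r) / c) (by gcongr; linarith)
          convert this.le using 1
          field_simp
          ring
    _ = (2 * r / c + 2) ^ d := by simp

end Grid

theorem grid_cells_intersecting_clusters_count_general {d k : ℕ} (hk : 1 ≤ k)
    (N : Seminorm ℝ (Fin d → ℝ))
    (hsign : ∀ σ x : Fin d → ℝ, (∀ j, σ j = 1 ∨ σ j = -1) → N (σ * x) = N x)
    (hbasis : ∀ j, N (Pi.single j 1) = 1)
    (Δ : ℝ) (hΔdef : Δ = cubeDiam N)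
    (X : Set (Fin d → ℝ)) (c r : ℝ) (hc : 0 < c) (hr : 0 ≤ r)
    (Fstar : Finset (Fin d → ℝ)) (hFstarCard : Fstar.card = k)
    (hFstar : ∀ x ∈ X, setDist N x Fstar ≤ r) :
    {z : Fin d → ℤ | (gridCell c z ∩ X).Nonempty}.Finite ∧
    (Nat.card {z : Fin d → ℤ | (gridCell c z ∩ X).Nonempty} : ℝ)
      ≤ k * (1 + 2 * Δ + 2 * r / c) ^ d := by
  have hFne : Fstar.Nonempty := Finset.card_pos.1 (by omega)
  have hsub : {z | (gridCell c z ∩ X).Nonempty} ⊆ Fstar.biUnion (gridWindow c r) := by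
    rw [setOf_gridCell_inter_nonempty hc]
    rintro _ ⟨x, hx, rfl⟩
    obtain ⟨f, hf, hxf⟩ := exists_sub_le_of_setDist_le N hFne (hFstar x hx)
    exact mem_biUnion.2 ⟨f, hf, gridIndex_mem_gridWindow hc fun j =>
      (N.abs_apply_le hsign hbasis (x - f) j).trans hxf⟩
  have hwindow : (2 * r / c + 2) ^ d ≤ (1 + 2 * Δ + 2 * r / c) ^ d := by
    rcases d.eq_zero_or_pos with rfl | hd
    · simp
    · exact pow_le_pow_left₀ (by positivity) (by linarith [one_le_cubeDiam N hbasis hd]) d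
  refine ⟨(Fstar.biUnion (gridWindow c r)).finite_toSet.subset hsub, ?_⟩
  calc (Nat.card {z : Fin d → ℤ | (gridCell c z ∩ X).Nonempty} : ℝ)
      ≤ (Fstar.biUnion (gridWindow c r)).card := by
        rw [← Nat.card_eq_finsetCard]
        exact_mod_cast Nat.card_mono (Finset.finite_toSet _) hsub
    _ ≤ ∑ f ∈ Fstar, ((gridWindow c r f).card : ℝ) := by exact_mod_cast card_biUnion_le
    _ ≤ ∑ _f ∈ Fstar, (1 + 2 * Δ + 2 * r / c) ^ d :=
        sum_le_sum fun f _ => (card_gridWindow_le hc hr f).trans hwindow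
    _ = k * (1 + 2 * Δ + 2 * r / c) ^ d := by rw [sum_const, hFstarCard, nsmul_eq_mul]

/-- If every point of `X` is within `κ`-distance `r` of a set `F*` of `k` centers, then the
number of cells of the axis-aligned grid of side `c` that intersect `X` is at most
`k·(1 + 2Δ + 2r/c)^d`.  Here `κ` is induced by a sign-invariant normalized norm and `Δ` is
the `κ`-diameter of the unit cube. -/
theorem grid_cells_intersecting_clusters_count {d k : ℕ} (hk : 1 ≤ k)
    (N : Seminorm ℝ (Fin d → ℝ)) (hNdef : ∀ x, N x = 0 → x = 0)
    (hsign : ∀ σ x : Fin d → ℝ, (∀ j, σ j = 1 ∨ σ j = -1) → N (σ * x) = N x)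
    (hbasis : ∀ j, N (Pi.single j 1) = 1)
    (Δ : ℝ) (hΔdef : Δ = cubeDiam N)
    (X : Set (Fin d → ℝ)) (c r : ℝ) (hc : 0 < c) (hr : 0 ≤ r)
    (Fstar : Finset (Fin d → ℝ)) (hFstarCard : Fstar.card = k)
    (hFstar : ∀ x ∈ X, setDist N x Fstar ≤ r) :
    {z : Fin d → ℤ | (gridCell c z ∩ X).Nonempty}.Finite ∧
    (Nat.card {z : Fin d → ℤ | (gridCell c z ∩ X).Nonempty} : ℝ)
      ≤ k * (1 + 2 * Δ + 2 * r / c) ^ d :=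
  grid_cells_intersecting_clusters_count_general hk N hsign hbasis Δ hΔdef X c r hc hr Fstar
    hFstarCard hFstar
end

section
/- Let P be a probability distribution and F* a finite set of k centers. Suppose that with probability at least q ∈ (0,1], a batch of n i.i.d. samples from P contains, for every f ∈ F*, at least one point whose nearest center in F* is f. Then for every integer m ≥ 1 and every δ ∈ (0,1), drawing ⌈(1 + ln(1/δ))·m/q⌉ independent batches of n i.i.d. samples each — i.e., O((n·m/q)·log(1/δ)) samples in total — yields, with probability at least 1 − δ, at least m sample points from each cluster of F*. -/
/-!
Call a batch good if it hits every cluster; it is good with (outer) probability `p ≥ q`.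
Once `m` of the `T` batches are good, every cluster holds at least `m` sample points, so the
failure probability is at most `ℙ(Bin(T, p) < m)`. The Chernoff bound with parameter
`s = 1 / t`, `t = pT / m ≥ 1 + log (1 / δ)`, bounds this by `t ^ (m - 1) * exp (m - pT)`,
and `t ≤ exp (t - 1)` turns that into `exp (1 - t) ≤ δ`.
-/

open MeasureTheory Finset

/-- `ℙ(X < m)` for `X ∼ Bin(T, p)`. -/
noncomputable def binomialLowerTail (T : ℕ) (p : ℝ) (m : ℕ) : ℝ :=
  ∑ j ∈ range m, T.choose j * p ^ j * (1 - p) ^ (T - j)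

/-- Markov's inequality for `s ^ X`, `X ∼ Bin(T, p)`, at level `X ≤ k`. -/
lemma pow_mul_binomialLowerTail_le {s p : ℝ} (hs0 : 0 ≤ s) (hs1 : s ≤ 1)
    (hp0 : 0 ≤ p) (hp1 : p ≤ 1) (T k : ℕ) :
    s ^ k * binomialLowerTail T p (k + 1) ≤ (s * p + (1 - p)) ^ T := by
  have h1p : 0 ≤ 1 - p := by linarith
  set g : ℕ → ℝ := fun j => (s * p) ^ j * (1 - p) ^ (T - j) * T.choose j
  have hg : ∀ j, 0 ≤ g j := fun j => by positivity
  calc s ^ k * binomialLowerTail T p (k + 1)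
      ≤ ∑ j ∈ range (k + 1), g j := by
        rw [binomialLowerTail, mul_sum]
        refine sum_le_sum fun j hj => ?_
        have hsk : s ^ k ≤ s ^ j :=
          pow_le_pow_of_le_one hs0 hs1 (by simpa [Nat.lt_succ_iff] using hj)
        calc s ^ k * (T.choose j * p ^ j * (1 - p) ^ (T - j))
            ≤ s ^ j * (T.choose j * p ^ j * (1 - p) ^ (T - j)) := by gcongr
          _ = g j := by simp only [g]; ring
    _ ≤ ∑ j ∈ range (k + 1) ∪ range (T + 1), g j :=
        sum_le_sum_of_subset_of_nonneg subset_union_left fun j _ _ => hg j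
    _ = ∑ j ∈ range (T + 1), g j := by
        refine (sum_subset subset_union_right fun j _ hj => ?_).symm
        simp [g, Nat.choose_eq_zero_of_lt (by simpa using hj)]
    _ = (s * p + (1 - p)) ^ T := (add_pow _ _ T).symm

lemma binomialLowerTail_le_exp {p L : ℝ} {T m : ℕ} (hp0 : 0 ≤ p) (hp1 : p ≤ 1) (hL : 0 ≤ L)
    (h : (1 + L) * m ≤ p * T) : binomialLowerTail T p m ≤ Real.exp (-L) := by
  obtain _ | k := m
  · simpa [binomialLowerTail] using Real.exp_nonneg _
  push_cast at h
  have hpT : 0 < p * T := by nlinarith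
  set t := p * T / (k + 1) with ht_def
  have hpt : p * T = (k + 1) * t := by rw [ht_def]; field_simp
  have ht : 1 + L ≤ t := by rw [ht_def, le_div_iff₀ (by positivity)]; linarith
  have ht0 : 0 < t := by linarith
  clear_value t
  have h1p : 0 ≤ 1 - p := by linarith
  calc binomialLowerTail T p (k + 1)
      = t ^ k * (t⁻¹ ^ k * binomialLowerTail T p (k + 1)) := by
        rw [← mul_assoc, ← mul_pow, mul_inv_cancel₀ ht0.ne', one_pow, one_mul]
    _ ≤ t ^ k * (t⁻¹ * p + (1 - p)) ^ T := by
        gcongr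
        exact pow_mul_binomialLowerTail_le (by positivity) (inv_le_one_of_one_le₀ (by linarith))
          hp0 hp1 T k
    _ ≤ Real.exp (t - 1) ^ k * Real.exp (-(p * (1 - t⁻¹))) ^ T := by
        gcongr
        · linarith [Real.add_one_le_exp (t - 1)]
        · linarith [Real.add_one_le_exp (-(p * (1 - t⁻¹)))]
    _ = Real.exp (-(t - 1)) := by
        rw [← Real.exp_nat_mul, ← Real.exp_nat_mul, ← Real.exp_add]
        congr 1
        field_simp
        linear_combination (1 - t) * hpt
    _ ≤ Real.exp (-L) := by gcongr; linarith

lemma ofReal_binomialLowerTail {p : ℝ} (hp0 : 0 ≤ p) (hp1 : p ≤ 1) (T m : ℕ) :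
    ENNReal.ofReal (binomialLowerTail T p m) =
      ∑ j ∈ range m, T.choose j * ENNReal.ofReal p ^ j * ENNReal.ofReal (1 - p) ^ (T - j) := by
  have h1p : 0 ≤ 1 - p := by linarith
  rw [binomialLowerTail, ENNReal.ofReal_sum_of_nonneg fun j _ => by positivity]
  refine sum_congr rfl fun j _ => ?_
  rw [ENNReal.ofReal_mul (by positivity), ENNReal.ofReal_mul (by positivity),
    ENNReal.ofReal_natCast, ENNReal.ofReal_pow hp0, ENNReal.ofReal_pow h1p]

section IidBatches

variable {ι β : Type*} [Fintype ι] [MeasurableSpace β]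

lemma measurableSet_le_ncard_setOf_mem {U : Set β} (hU : MeasurableSet U) (m : ℕ) :
    MeasurableSet {ω : ι → β | m ≤ {b | ω b ∈ U}.ncard} := by
  have hφ : Measurable fun (ω : ι → β) (b : ι) => ω b ∈ U :=
    measurable_pi_lambda _ fun b => measurableSet_setOfPred.1 (measurable_pi_apply b hU)
  exact measurableSet_setOfPred.2 <|
    (Measurable.of_discrete (f := fun v : ι → Prop => m ≤ {b | v b}.ncard)).comp hφ

lemma measure_pi_setOf_mem_eq (μ : Measure β) [SigmaFinite μ] (U : Set β) (S : Finset ι) :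
    (Measure.pi fun _ : ι => μ) {ω | {b | ω b ∈ U} = ↑S} =
      μ U ^ #S * μ Uᶜ ^ (Fintype.card ι - #S) := by
  classical
  have hbox : {ω : ι → β | {b | ω b ∈ U} = ↑S} = Set.univ.pi fun b => if b ∈ S then U else Uᶜ := by
    ext ω
    simp only [Set.ext_iff, Set.mem_ofPred_eq, mem_coe, Set.mem_pi, Set.mem_univ, true_implies]
    refine forall_congr' fun b => ?_
    split_ifs with hb <;> simp [hb]
  simp only [hbox, Measure.pi_pi, apply_ite μ]
  rw [prod_ite, prod_const, prod_const, filter_mem_eq_inter, univ_inter,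
    filter_not, filter_mem_eq_inter, univ_inter, card_sdiff, card_univ, inter_univ]

lemma measure_pi_ncard_setOf_mem_lt_le (μ : Measure β) [SigmaFinite μ] (U : Set β) (m : ℕ) :
    (Measure.pi fun _ : ι => μ) {ω | {b | ω b ∈ U}.ncard < m} ≤
      ∑ j ∈ range m, (Fintype.card ι).choose j * μ U ^ j * μ Uᶜ ^ (Fintype.card ι - j) := by
  classical
  have hcover : {ω : ι → β | {b | ω b ∈ U}.ncard < m} ⊆
      ⋃ j ∈ range m, ⋃ S ∈ powersetCard j (univ : Finset ι), {ω | {b | ω b ∈ U} = ↑S} := by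
    intro ω hω
    simp only [Set.mem_iUnion, Set.mem_ofPred_eq, mem_range, mem_powersetCard_univ]
    exact ⟨_, Set.ncard_eq_toFinset_card' {b | ω b ∈ U} ▸ hω, _, rfl, (Set.coe_toFinset _).symm⟩
  calc (Measure.pi fun _ : ι => μ) {ω | {b | ω b ∈ U}.ncard < m}
      ≤ ∑ j ∈ range m, ∑ S ∈ powersetCard j (univ : Finset ι),
          (Measure.pi fun _ : ι => μ) {ω | {b | ω b ∈ U} = ↑S} :=
        (measure_mono hcover).trans <| (measure_biUnion_finset_le _ _).trans <|
          sum_le_sum fun j _ => measure_biUnion_finset_le _ _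
    _ = _ := by
        refine sum_congr rfl fun j _ => ?_
        rw [sum_congr rfl fun S hS => by rw [measure_pi_setOf_mem_eq, mem_powersetCard_univ.1 hS],
          sum_const, card_powersetCard, card_univ, nsmul_eq_mul, mul_assoc]

lemma measure_compl_toMeasurable_union (μ : Measure β) (s : Set β) :
    μ ((toMeasurable μ s)ᶜ ∪ s) = μ Set.univ := by
  have hU := measurableSet_toMeasurable μ s
  have hsU := subset_toMeasurable μ s
  have hinter : ((toMeasurable μ s)ᶜ ∪ s) ∩ toMeasurable μ s = s := by
    ext x; have := @hsU x; simp only [Set.mem_inter_iff, Set.mem_union, Set.mem_compl_iff]; tauto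
  have hdiff : ((toMeasurable μ s)ᶜ ∪ s) \ toMeasurable μ s = (toMeasurable μ s)ᶜ := by
    ext x; have := @hsU x; simp only [Set.mem_sdiff, Set.mem_union, Set.mem_compl_iff]; tauto
  rw [← measure_inter_add_sdiff _ hU, hinter, hdiff, ← measure_toMeasurable s,
    measure_add_measure_compl hU]

/-- `G` need not be measurable: the bound is read off its measurable hull `U`, and `ν` does not
see batches in `U \ G`, since `Uᶜ ∪ G` has full outer measure. -/
lemma one_sub_binomialLowerTail_le_measure_pi (μ : Measure β) [IsProbabilityMeasure μ]
    (G : Set β) (m : ℕ) :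
    1 - ENNReal.ofReal (binomialLowerTail (Fintype.card ι) (μ.real G) m) ≤
      (Measure.pi fun _ : ι => μ) {ω | m ≤ {b | ω b ∈ G}.ncard} := by
  set ν := Measure.pi fun _ : ι => μ
  set U := toMeasurable μ G
  have hU : MeasurableSet U := measurableSet_toMeasurable μ G
  have hμU : μ U = ENNReal.ofReal (μ.real G) := by
    rw [measure_toMeasurable, measureReal_def, ENNReal.ofReal_toReal (measure_ne_top μ G)]
  have hμUc : μ Uᶜ = ENNReal.ofReal (1 - μ.real G) := by
    rw [prob_compl_eq_one_sub hU, hμU, ENNReal.ofReal_sub _ measureReal_nonneg, ENNReal.ofReal_one]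
  set A := {ω : ι → β | m ≤ {b | ω b ∈ U}.ncard}
  have hA : MeasurableSet A := measurableSet_le_ncard_setOf_mem hU m
  have hνA : 1 - ENNReal.ofReal (binomialLowerTail (Fintype.card ι) (μ.real G) m) ≤ ν A := by
    rw [ofReal_binomialLowerTail measureReal_nonneg measureReal_le_one, ← hμU, ← hμUc,
      ← ENNReal.sub_sub_cancel ENNReal.one_ne_top (prob_le_one (μ := ν) (s := A)),
      ← prob_compl_eq_one_sub hA]
    gcongr
    refine (congrArg ν ?_).trans_le (measure_pi_ncard_setOf_mem_lt_le μ U m)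
    ext ω
    simp [A]
  set N := Set.univ.pi fun _ : ι => Uᶜ ∪ G
  have hνN : ν N = ν Set.univ := by
    simp [N, ν, Measure.pi_pi, measure_compl_toMeasurable_union, U]
  calc _ ≤ ν A := hνA
    _ = ν (N ∩ A) := by
        rw [Measure.measure_inter_eq_of_measure_eq hA hνN (Set.subset_univ _) (measure_ne_top _ _),
          Set.univ_inter]
    _ ≤ _ := measure_mono fun ω ⟨hωN, hωA⟩ => hωA.trans <|
        Set.ncard_le_ncard fun b hb => (hωN b trivial).resolve_left (not_not.2 hb)

end IidBatches

lemma ncard_setOf_exists_le_natCard {ι J : Type*} [Finite ι] [Finite J] (R : ι → J → Prop) :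
    {b | ∃ i, R b i}.ncard ≤ Nat.card {bi : ι × J // R bi.1 bi.2} := by
  rw [← Nat.card_coe_set_eq]
  exact Nat.card_le_card_of_injective (fun b => ⟨(b.1, b.2.choose), b.2.choose_spec⟩)
    fun b b' h => Subtype.ext (congrArg (fun x => x.1.1) h)

theorem batches_hit_every_cluster_general
    {α : Type*} [MeasurableSpace α] [MetricSpace α]
    (P : Measure α) [IsProbabilityMeasure P]
    (Fstar : Finset α)
    (n : ℕ) (q : ℝ) (hq0 : 0 < q)
    (hbatch : ENNReal.ofReal q ≤ (Measure.pi fun _ : Fin n => P)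
      {ω | ∀ f ∈ Fstar, ∃ i, ∀ f' ∈ Fstar, dist (ω i) f ≤ dist (ω i) f'})
    (m : ℕ) (δ : ℝ) (hδ0 : 0 < δ) (hδ1 : δ < 1) :
    1 - ENNReal.ofReal δ ≤
      (Measure.pi fun _ : Fin ⌈(1 + Real.log (1 / δ)) * m / q⌉₊ =>
          Measure.pi fun _ : Fin n => P)
        {ω | ∀ f ∈ Fstar,
          m ≤ Nat.card {bi : Fin ⌈(1 + Real.log (1 / δ)) * m / q⌉₊ × Fin n //
            ∀ f' ∈ Fstar, dist (ω bi.1 bi.2) f ≤ dist (ω bi.1 bi.2) f'}} := by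
  set L := Real.log (1 / δ)
  set T := ⌈(1 + L) * m / q⌉₊
  set Q := Measure.pi fun _ : Fin n => P
  set G := {ω : Fin n → α | ∀ f ∈ Fstar, ∃ i, ∀ f' ∈ Fstar, dist (ω i) f ≤ dist (ω i) f'}
  have hL : 0 ≤ L := Real.log_nonneg (by rw [le_div_iff₀ hδ0]; linarith)
  have hqG : q ≤ Q.real G := (ENNReal.ofReal_le_iff_le_toReal (measure_ne_top _ _)).1 hbatch
  have hT : (1 + L) * m ≤ Q.real G * T :=
    calc (1 + L) * m = q * ((1 + L) * m / q) := by field_simp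
      _ ≤ Q.real G * T := by gcongr; exact Nat.le_ceil _
  have htail : binomialLowerTail T (Q.real G) m ≤ δ := by
    simpa [L, Real.exp_log hδ0] using
      binomialLowerTail_le_exp measureReal_nonneg measureReal_le_one hL hT
  calc 1 - ENNReal.ofReal δ ≤ 1 - ENNReal.ofReal (binomialLowerTail T (Q.real G) m) := by gcongr
    _ ≤ (Measure.pi fun _ : Fin T => Q) {ω | m ≤ {b | ω b ∈ G}.ncard} := by
        simpa using one_sub_binomialLowerTail_le_measure_pi (ι := Fin T) Q G m
    _ ≤ _ := by
        refine measure_mono fun ω (hω : m ≤ _) f hf => hω.trans ?_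
        exact (Set.ncard_le_ncard fun b (hb : ω b ∈ G) => hb f hf).trans
          (ncard_setOf_exists_le_natCard fun b i => ∀ f' ∈ Fstar, dist (ω b i) f ≤ dist (ω b i) f')

/-- Coupon-collector style sampling bound: if a batch of `n` i.i.d. samples from `P`
contains a point from each cluster of `F*` with probability at least `q`, then
`⌈(1 + ln(1/δ))·m/q⌉` independent batches contain, with probability at least `1 - δ`,
at least `m` sample points from each cluster of `F*`. -/
theorem batches_hit_every_cluster
    {α : Type*} [MeasurableSpace α] [MetricSpace α]
    (P : Measure α) [IsProbabilityMeasure P]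
    (Fstar : Finset α) (hFstar : Fstar.Nonempty)
    (n : ℕ) (hn : 1 ≤ n) (q : ℝ) (hq0 : 0 < q) (hq1 : q ≤ 1)
    (hbatch : ENNReal.ofReal q ≤ (Measure.pi fun _ : Fin n => P)
      {ω | ∀ f ∈ Fstar, ∃ i, ∀ f' ∈ Fstar, dist (ω i) f ≤ dist (ω i) f'})
    (m : ℕ) (hm : 1 ≤ m) (δ : ℝ) (hδ0 : 0 < δ) (hδ1 : δ < 1) :
    1 - ENNReal.ofReal δ ≤
      (Measure.pi fun _ : Fin ⌈(1 + Real.log (1 / δ)) * m / q⌉₊ =>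
          Measure.pi fun _ : Fin n => P)
        {ω | ∀ f ∈ Fstar,
          m ≤ Nat.card {bi : Fin ⌈(1 + Real.log (1 / δ)) * m / q⌉₊ × Fin n //
            ∀ f' ∈ Fstar, dist (ω bi.1 bi.2) f ≤ dist (ω bi.1 bi.2) f'}} :=
  batches_hit_every_cluster_general P Fstar n q hq0 hbatch m δ hδ0 hδ1
end
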